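/- Let 𝒜 be a complex Banach algebra and let L₁, L₂ ∈ 𝒜. Then for every s ≥ 0, [ (1/2)L₁ + L₂ , exp(s L₂)·exp((s/2)L₁) ] = (1/2) ∫₀ˢ exp((s−u)L₂) · [ exp(u L₂)·exp(((s−u)/2)L₁) , [L₂, L₁] ] · exp((u/2)L₁) du. -/

import Mathlib

/-!
Write `A = L₁/2 + L₂`. The Leibniz rule `[A, e₂ e₁] = [A, e₂] e₁ + e₂ [A, e₁]` reduces the left-hand
side to commutators with single exponentials, and for these Duhamel's formula
`[a, exp(sx)] = ∫₀ˢ exp((s-u)x) [a, x] exp(ux) du` holds because the integrand is the derivative of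
`u ↦ exp((s-u)x) a exp(ux)`. Since `[A, L₂] = [L₁, L₂]/2` and `[A, L₁/2] = [L₂, L₁]/2`, splitting
`exp(sL₂)` and `exp(sL₁/2)` at `u` brings both integrands into the common form of the right-hand side.
-/

open MeasureTheory NormedSpace

theorem mul_mul_sub_mul_mul {R : Type*} [Ring R] (a e f : R) :
    a * (e * f) - e * f * a = (a * e - e * a) * f + e * (a * f - f * a) := by
  noncomm_ring

section Duhamel

variable {𝒜 : Type*} [NormedRing 𝒜] [NormedAlgebra ℝ 𝒜] [CompleteSpace 𝒜]

theorem intervalIntegral.integral_const_mul_of_intervalIntegrable {f : ℝ → 𝒜} {a b : ℝ}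
    (hf : IntervalIntegrable f volume a b) (c : 𝒜) :
    ∫ u in a..b, c * f u = c * ∫ u in a..b, f u :=
  (ContinuousLinearMap.mul ℝ 𝒜 c).intervalIntegral_comp_comm hf

theorem intervalIntegral.integral_mul_const_of_intervalIntegrable {f : ℝ → 𝒜} {a b : ℝ}
    (hf : IntervalIntegrable f volume a b) (c : 𝒜) :
    ∫ u in a..b, f u * c = (∫ u in a..b, f u) * c :=
  ((ContinuousLinearMap.mul ℝ 𝒜).flip c).intervalIntegral_comp_comm hf

theorem exp_add_smul (x : 𝒜) (a b : ℝ) : exp ((a + b) • x) = exp (a • x) * exp (b • x) := by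
  have hball (y : 𝒜) : y ∈ Metric.eball 0 (expSeries ℝ 𝒜).radius := by
    simp [expSeries_radius_eq_top]
  rw [add_smul, exp_add_of_commute_of_mem_ball
    (((Commute.refl x).smul_left a).smul_right b) (hball _) (hball _)]

theorem hasDerivAt_exp_sub_smul_mul_mul_exp_smul (s : ℝ) (x a : 𝒜) (t : ℝ) :
    HasDerivAt (fun u : ℝ => exp ((s - u) • x) * a * exp (u • x))
      (exp ((s - t) • x) * (a * x - x * a) * exp (t • x)) t := by
  have hleft : HasDerivAt (fun u : ℝ => exp ((s - u) • x)) (-(exp ((s - t) • x) * x)) t :=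
    ((hasDerivAt_exp_smul_const x (s - t)).scomp t ((hasDerivAt_id t).const_sub s)).congr_deriv
      (neg_one_smul ℝ _)
  refine ((hleft.mul_const a).mul (hasDerivAt_exp_smul_const' x t)).congr_deriv ?_
  noncomm_ring

theorem continuous_exp_sub_smul_mul_mul_exp_smul (s : ℝ) (x a : 𝒜) :
    Continuous fun u : ℝ => exp ((s - u) • x) * a * exp (u • x) :=
  continuous_iff_continuousAt.2 fun t =>
    (hasDerivAt_exp_sub_smul_mul_mul_exp_smul s x a t).continuousAt

theorem mul_exp_smul_sub_exp_smul_mul (s : ℝ) (x a : 𝒜) :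
    a * exp (s • x) - exp (s • x) * a =
      ∫ u in (0 : ℝ)..s, exp ((s - u) • x) * (a * x - x * a) * exp (u • x) := by
  rw [intervalIntegral.integral_eq_sub_of_hasDerivAt
    (fun t _ => hasDerivAt_exp_sub_smul_mul_mul_exp_smul s x a t)
    ((continuous_exp_sub_smul_mul_mul_exp_smul s x _).intervalIntegrable 0 s)]
  simp

theorem mul_exp_smul_mul_exp_smul_sub (s : ℝ) (x y a : 𝒜) :
    a * (exp (s • x) * exp (s • y)) - exp (s • x) * exp (s • y) * a =
      ∫ u in (0 : ℝ)..s, exp ((s - u) • x) * (a * x - x * a) * exp (u • x) * exp (s • y)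
        + exp (s • x) * (exp ((s - u) • y) * (a * y - y * a) * exp (u • y)) := by
  have hint (z b : 𝒜) : IntervalIntegrable (fun u : ℝ => exp ((s - u) • z) * b * exp (u • z))
      volume 0 s :=
    (continuous_exp_sub_smul_mul_mul_exp_smul s z b).intervalIntegrable 0 s
  rw [mul_mul_sub_mul_mul, mul_exp_smul_sub_exp_smul_mul, mul_exp_smul_sub_exp_smul_mul,
    intervalIntegral.integral_add ((hint _ _).mul_const _) ((hint _ _).const_mul _),
    intervalIntegral.integral_mul_const_of_intervalIntegrable (hint _ _),
    intervalIntegral.integral_const_mul_of_intervalIntegrable (hint _ _)]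

end Duhamel

theorem strang_commutator_representation_general
    {𝒜 : Type*} [NormedRing 𝒜] [NormedAlgebra ℂ 𝒜] [CompleteSpace 𝒜]
    (L₁ L₂ : 𝒜) (s : ℝ) :
    ((1 / 2 : ℝ) • L₁ + L₂) * (exp (s • L₂) * exp ((s / 2) • L₁))
        - (exp (s • L₂) * exp ((s / 2) • L₁)) * ((1 / 2 : ℝ) • L₁ + L₂) =
      (1 / 2 : ℝ) • ∫ u in (0:ℝ)..s,
        exp ((s - u) • L₂) *
          (exp (u • L₂) * exp (((s - u) / 2) • L₁) * (L₂ * L₁ - L₁ * L₂)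
            - (L₂ * L₁ - L₁ * L₂) *
              (exp (u • L₂) * exp (((s - u) / 2) • L₁))) *
          exp ((u / 2) • L₁) := by
  set A : 𝒜 := (1 / 2 : ℝ) • L₁ + L₂
  set M : 𝒜 := (1 / 2 : ℝ) • L₁
  have half_smul (r : ℝ) : r • M = (r / 2) • L₁ := by rw [smul_smul]; ring_nf
  have hA₂ : A * L₂ - L₂ * A = (1 / 2 : ℝ) • (L₁ * L₂ - L₂ * L₁) := by
    simp only [A, add_mul, mul_add, smul_mul_assoc, mul_smul_comm, smul_sub]; abel
  have hA₁ : A * M - M * A = (1 / 2 : ℝ) • (L₂ * L₁ - L₁ * L₂) := by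
    simp only [A, M, add_mul, mul_add, smul_mul_assoc, mul_smul_comm, smul_add, smul_sub]; abel
  have hsplit (u : ℝ) (y : 𝒜) : exp (s • y) = exp ((s - u) • y) * exp (u • y) := by
    rw [← exp_add_smul, sub_add_cancel]
  rw [← half_smul s, mul_exp_smul_mul_exp_smul_sub, ← intervalIntegral.integral_smul]
  refine intervalIntegral.integral_congr fun u _ => ?_
  rw [hsplit u L₂, hsplit u M]
  simp only [half_smul, hA₁, hA₂, smul_mul_assoc, mul_smul_comm, ← smul_add]
  congr 1
  noncomm_ring

/-- Commutator identity for the Strang splitting: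
`[ (1/2)L₁ + L₂ , exp(sL₂) exp((s/2)L₁) ]
  = (1/2) ∫₀ˢ exp((s−u)L₂) [ exp(uL₂) exp(((s−u)/2)L₁), [L₂,L₁] ] exp((u/2)L₁) du`. -/
theorem strang_commutator_representation
    {𝒜 : Type*} [NormedRing 𝒜] [NormedAlgebra ℂ 𝒜] [CompleteSpace 𝒜]
    (L₁ L₂ : 𝒜) (s : ℝ) (hs : 0 ≤ s) :
    ((1 / 2 : ℝ) • L₁ + L₂) * (exp (s • L₂) * exp ((s / 2) • L₁))
        - (exp (s • L₂) * exp ((s / 2) • L₁)) * ((1 / 2 : ℝ) • L₁ + L₂) =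
      (1 / 2 : ℝ) • ∫ u in (0:ℝ)..s,
        exp ((s - u) • L₂) *
          (exp (u • L₂) * exp (((s - u) / 2) • L₁) * (L₂ * L₁ - L₁ * L₂)
            - (L₂ * L₁ - L₁ * L₂) *
              (exp (u • L₂) * exp (((s - u) / 2) • L₁))) *
          exp ((u / 2) • L₁) :=
  strang_commutator_representation_general L₁ L₂ s
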